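/- Let W_λ denote the irreducible representation of the symmetric group S_{mi} associated to a partition λ of mi, H ⊂ S_{mi} the wreath-product subgroup S_m^{×i} ⋊ S_i (acting on {1,...,mi} partitioned into i consecutive blocks of size m). For λ = mδ_i (the rectangular partition with i parts all equal to m), the space of H-invariants [W_{mδ_i}]^H is one-dimensional. -/

import Mathlib

open Finset

/-- The element of the column group of the rectangular tableau `B_o` (rows indexed by
`Fin i`, columns by `Fin m`, so the cells/letters permuted by `S_{mi}` are indexed by
`Fin i × Fin m`) determined by `μ : Fin m → S_i`: the permutation `(a,b) ↦ (μ_b a, b)`. -/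
def colPerm {i m : ℕ} (μ : Fin m → Equiv.Perm (Fin i)) : Equiv.Perm (Fin i × Fin m) :=
  ((Equiv.prodComm (Fin i) (Fin m)).trans
    (Equiv.prodShear (Equiv.refl (Fin m)) μ)).trans (Equiv.prodComm (Fin m) (Fin i))

/-- The element of the row group of `B_o` determined by `ρ : Fin i → S_m`:
`(a,b) ↦ (a, ρ_a b)`. -/
def rowPerm {i m : ℕ} (ρ : Fin i → Equiv.Perm (Fin m)) : Equiv.Perm (Fin i × Fin m) :=
  Equiv.prodShear (Equiv.refl (Fin i)) ρ

/-- The Young symmetrizer `S(B_o) = (∑_{μ ∈ Col} sgn(μ)·μ)·(∑_{ρ ∈ Row} ρ)` of the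
rectangular tableau of shape `(m^i)`, as an element of the group algebra `ℂ[S_{mi}]`. -/
noncomputable def youngSym (i m : ℕ) : MonoidAlgebra ℂ (Equiv.Perm (Fin i × Fin m)) :=
  ∑ μ : Fin m → Equiv.Perm (Fin i), ∑ ρ : Fin i → Equiv.Perm (Fin m),
    ((((∏ b, Equiv.Perm.sign (μ b) : ℤˣ) : ℤ)) : ℂ) •
      MonoidAlgebra.of ℂ (Equiv.Perm (Fin i × Fin m)) (colPerm μ * rowPerm ρ)

/-- The left ideal `ℂ[S_{mi}]·S(B_o)`: a realization of the irreducible `S_{mi}`-module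
`W_{mδ_i}` associated to the rectangular partition `mδ_i = (m,...,m)` (`i` parts). -/
noncomputable def rectSpecht (i m : ℕ) :
    Submodule ℂ (MonoidAlgebra ℂ (Equiv.Perm (Fin i × Fin m))) :=
  Submodule.span ℂ
    {x | ∃ g : Equiv.Perm (Fin i × Fin m),
      x = MonoidAlgebra.of ℂ (Equiv.Perm (Fin i × Fin m)) g * youngSym i m}

/-- `H = S_m^{×i} ⋊ S_i ⊂ S_{mi}`, the letters `Fin i × Fin m` being partitioned into `i`
blocks of size `m`: the permutations `(a,b) ↦ (π a, ρ_a b)`. -/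
def InWreath {i m : ℕ} (h : Equiv.Perm (Fin i × Fin m)) : Prop :=
  ∃ (π : Equiv.Perm (Fin i)) (ρ : Fin i → Equiv.Perm (Fin m)),
    ∀ ab : Fin i × Fin m, h ab = (π ab.1, ρ ab.1 ab.2)


/-!
Write `e_H = ∑_{h ∈ H} h`. An `H`-invariant `x` of the left ideal `ℂ[S_{mi}]·S` equals
`|H|⁻¹ e_H x`, so the invariants are spanned by the elements `e_H g S`. If `g` sends two cells of
one column of the tableau into the same block, the transposition `τ` of their images lies in `H`
and `g⁻¹ τ g` is a column transposition, so `e_H g S = -e_H g S = 0`. Otherwise `g = h c` with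
`h ∈ H` and `c` in the column group, and `e_H g S = sgn(c) e_H S`. Finally `e_H S ≠ 0`: its
coefficient at `1` is a sum over the pairs `(c, r)` of column and row permutations with `c r ∈ H`,
i.e. with `c` acting by one permutation `π` on every column, each counted with sign
`sgn(π)^m = 1` as `m` is even.
-/

open MonoidAlgebra Equiv

section SubgroupSum

variable (k : Type*) {G : Type*} [Group G] (H : Subgroup G) [Fintype H]

noncomputable def subgroupSum [CommRing k] : MonoidAlgebra k G :=
  ∑ h : H, of k G h

variable {k H}

section CommRing

variable [CommRing k]

theorem of_mul_subgroupSum {g : G} (hg : g ∈ H) :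
    of k G g * subgroupSum k H = subgroupSum k H := by
  rw [subgroupSum, Finset.mul_sum]
  exact Fintype.sum_equiv (Equiv.mulLeft ⟨g, hg⟩) _ _ fun h => by rw [← map_mul]; rfl

theorem subgroupSum_mul_of {g : G} (hg : g ∈ H) :
    subgroupSum k H * of k G g = subgroupSum k H := by
  rw [subgroupSum, Finset.sum_mul]
  exact Fintype.sum_equiv (Equiv.mulRight ⟨g, hg⟩) _ _ fun h => by rw [← map_mul]; rfl

theorem coeff_subgroupSum [DecidablePred (· ∈ H)] (g : G) :
    (subgroupSum k H).coeff g = if g ∈ H then 1 else 0 := by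
  classical
  simp only [subgroupSum, coeff_sum, Finsupp.coe_finsetSum, Finset.sum_apply, of_apply,
    coeff_single, Finsupp.single_apply]
  split_ifs with hg
  · rw [Fintype.sum_eq_single ⟨g, hg⟩ fun h hne => if_neg fun h' => hne (Subtype.ext h'),
      if_pos rfl]
  · exact Finset.sum_eq_zero fun h _ => if_neg fun (h' : (h : G) = g) => hg (h' ▸ h.2)

theorem coeff_subgroupSum_mul_of_one [DecidablePred (· ∈ H)] (g : G) :
    (subgroupSum k H * of k G g).coeff 1 = if g ∈ H then 1 else 0 := by
  simp only [of_apply, coeff_mul_single_apply, one_mul, mul_one, coeff_subgroupSum, inv_mem_iff]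

theorem subgroupSum_mul_eq_card_smul {x : MonoidAlgebra k G}
    (hx : ∀ h ∈ H, of k G h * x = x) : subgroupSum k H * x = Fintype.card H • x := by
  rw [subgroupSum, Finset.sum_mul, Finset.sum_congr rfl fun (h : H) _ => hx h h.2,
    Finset.sum_const, Finset.card_univ]

theorem subgroupSum_mul_mem_span (s : MonoidAlgebra k G) :
    subgroupSum k H * s ∈ Submodule.span k {x | ∃ g, x = of k G g * s} := by
  rw [subgroupSum, Finset.sum_mul]
  exact Submodule.sum_mem _ fun h _ => Submodule.subset_span ⟨h, rfl⟩

end CommRing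

section Field

variable [Field k]

theorem subgroupSum_mul_of_mul_eq_zero [NeZero (2 : k)] {g t : G} {s : MonoidAlgebra k G}
    (ht : g * t * g⁻¹ ∈ H) (hs : of k G t * s = -s) : subgroupSum k H * of k G g * s = 0 := by
  have hneg : subgroupSum k H * of k G g * s = -(subgroupSum k H * of k G g * s) := by
    conv_lhs => rw [← subgroupSum_mul_of ht, mul_assoc, mul_assoc, ← mul_assoc (of k G _),
      ← map_mul, inv_mul_cancel_right, map_mul, mul_assoc, hs, mul_neg, mul_neg, ← mul_assoc]
  have htwo : (2 : k) • (subgroupSum k H * of k G g * s) = 0 := by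
    rw [two_smul]; nth_rewrite 1 [hneg]; exact neg_add_cancel _
  exact (smul_eq_zero.mp htwo).resolve_left two_ne_zero

theorem invariants_span_eq_line [CharZero k] (s : MonoidAlgebra k G)
    (hs : ∀ g, ∃ c : k, subgroupSum k H * of k G g * s = c • (subgroupSum k H * s)) :
    {x | x ∈ Submodule.span k {x | ∃ g, x = of k G g * s} ∧ ∀ h, h ∈ H → of k G h * x = x} =
      {x | ∃ c : k, x = c • (subgroupSum k H * s)} := by
  ext x
  constructor
  · rintro ⟨hx, hinv⟩
    have hline : Submodule.span k {x | ∃ g, x = of k G g * s} ≤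
        (k ∙ (subgroupSum k H * s)).comap (LinearMap.mulLeft k (subgroupSum k H)) := by
      rw [Submodule.span_le]
      rintro _ ⟨g, rfl⟩
      obtain ⟨c, hc⟩ := hs g
      rw [SetLike.mem_coe, Submodule.mem_comap, LinearMap.mulLeft_apply, ← mul_assoc, hc]
      exact Submodule.smul_mem _ c (Submodule.mem_span_singleton_self _)
    obtain ⟨c, hc⟩ := Submodule.mem_span_singleton.mp (hline hx)
    rw [LinearMap.mulLeft_apply, subgroupSum_mul_eq_card_smul hinv,
      ← Nat.cast_smul_eq_nsmul k] at hc
    refine ⟨(Fintype.card H : k)⁻¹ * c, ?_⟩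
    rw [mul_smul, hc, inv_smul_smul₀ (Nat.cast_ne_zero.mpr Fintype.card_ne_zero)]
  · rintro ⟨c, rfl⟩
    refine ⟨Submodule.smul_mem _ _ (subgroupSum_mul_mem_span s), fun h hh => ?_⟩
    rw [mul_smul_comm, ← mul_assoc, of_mul_subgroupSum hh]

end Field

end SubgroupSum

section RectangularTableau

variable {i m : ℕ}

@[simp]
theorem colPerm_apply (μ : Fin m → Perm (Fin i)) (x : Fin i × Fin m) :
    colPerm μ x = (μ x.2 x.1, x.2) := rfl

@[simp]
theorem rowPerm_apply (ρ : Fin i → Perm (Fin m)) (x : Fin i × Fin m) :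
    rowPerm ρ x = (x.1, ρ x.1 x.2) := rfl

@[simp]
theorem colPerm_one : colPerm (1 : Fin m → Perm (Fin i)) = 1 := rfl

theorem colPerm_mul (μ ν : Fin m → Perm (Fin i)) : colPerm (μ * ν) = colPerm μ * colPerm ν := rfl

theorem colPerm_mulSingle_swap (a a' : Fin i) (b : Fin m) :
    colPerm (Pi.mulSingle b (swap a a')) = swap (a, b) (a', b) := by
  ext ⟨x, y⟩ <;> by_cases hy : y = b <;>
    simp [hy, swap_apply_def, apply_ite Prod.fst, apply_ite Prod.snd]

def wreathSubgroup (i m : ℕ) : Subgroup (Perm (Fin i × Fin m)) where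
  carrier := {h | InWreath h}
  one_mem' := ⟨1, 1, fun _ => rfl⟩
  mul_mem' := by
    rintro h h' ⟨π, ρ, hh⟩ ⟨π', ρ', hh'⟩
    exact ⟨π * π', fun a => ρ (π' a) * ρ' a, fun x => by simp [Perm.mul_apply, hh, hh']⟩
  inv_mem' := by
    rintro h ⟨π, ρ, hh⟩
    refine ⟨π⁻¹, fun a => (ρ (π⁻¹ a))⁻¹, fun x => ?_⟩
    rw [Perm.inv_eq_iff_eq, hh]
    simp

theorem mem_wreathSubgroup {h : Perm (Fin i × Fin m)} : h ∈ wreathSubgroup i m ↔ InWreath h :=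
  Iff.rfl

noncomputable instance : Fintype (wreathSubgroup i m) := Fintype.ofFinite _

theorem inWreath_of_forall_fst_eq {h : Perm (Fin i × Fin m)} (hh : ∀ x, (h x).1 = x.1) :
    InWreath h := by
  have hbij (a : Fin i) : Function.Bijective fun b => (h (a, b)).2 := by
    refine Finite.injective_iff_bijective.mp fun b b' hbb' => ?_
    have := h.injective (Prod.ext ((hh (a, b)).trans (hh (a, b')).symm) hbb')
    exact (Prod.ext_iff.mp this).2
  exact ⟨1, fun a => Equiv.ofBijective _ (hbij a), fun x => Prod.ext (hh x) rfl⟩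

theorem inWreath_swap {x y : Fin i × Fin m} (hxy : x.1 = y.1) : InWreath (swap x y) :=
  inWreath_of_forall_fst_eq fun z => by
    rw [swap_apply_def]
    split_ifs with hx hy
    · rw [hx, hxy]
    · rw [hy, hxy]
    · rfl

theorem inWreath_colPerm_mul_rowPerm_iff (μ : Fin m → Perm (Fin i)) (ρ : Fin i → Perm (Fin m)) :
    InWreath (colPerm μ * rowPerm ρ) ↔ ∃ π, μ = fun _ => π := by
  constructor
  · rintro ⟨π, ρ', hw⟩
    refine ⟨π, funext fun b => Equiv.ext fun a => ?_⟩
    have h := hw (a, (ρ a)⁻¹ b)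
    simp only [Perm.mul_apply, rowPerm_apply, colPerm_apply, Prod.ext_iff] at h
    simpa using h.1
  · rintro ⟨π, rfl⟩
    exact ⟨π, ρ, fun x => by simp [Perm.mul_apply]⟩

theorem exists_inWreath_mul_colPerm {g : Perm (Fin i × Fin m)}
    (hg : ∀ b, Function.Injective fun a => (g (a, b)).1) :
    ∃ h μ, InWreath h ∧ g = h * colPerm μ := by
  let μ (b : Fin m) : Perm (Fin i) :=
    Equiv.ofBijective _ (Finite.injective_iff_bijective.mp (hg b))
  refine ⟨g * colPerm μ⁻¹, μ, inWreath_of_forall_fst_eq fun x => ?_, ?_⟩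
  · exact (μ x.2).apply_symm_apply x.1
  · rw [mul_assoc, ← colPerm_mul, inv_mul_cancel, colPerm_one, mul_one]

def colSign : (Fin m → Perm (Fin i)) →* ℤˣ where
  toFun μ := ∏ b, Perm.sign (μ b)
  map_one' := by simp
  map_mul' μ ν := by simp [Finset.prod_mul_distrib]

theorem colSign_mulSingle (b : Fin m) (σ : Perm (Fin i)) :
    colSign (Pi.mulSingle b σ) = Perm.sign σ := by
  simp [colSign, Pi.mulSingle_apply, apply_ite Perm.sign]

theorem colSign_const (heven : Even m) (π : Perm (Fin i)) : colSign (fun _ : Fin m => π) = 1 := by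
  simp [colSign, Int.units_pow_eq_pow_mod_two, Nat.even_iff.mp heven]

theorem youngSym_eq_sum_colSign :
    youngSym i m = ∑ μ : Fin m → Perm (Fin i), ∑ ρ : Fin i → Perm (Fin m),
      ((colSign μ : ℤ) : ℂ) • of ℂ _ (colPerm μ * rowPerm ρ) := rfl

theorem of_colPerm_mul_youngSym (ν : Fin m → Perm (Fin i)) :
    of ℂ _ (colPerm ν) * youngSym i m = ((colSign ν : ℤ) : ℂ) • youngSym i m := by
  rw [youngSym_eq_sum_colSign, Finset.mul_sum, Finset.smul_sum]
  refine Fintype.sum_equiv (Equiv.mulLeft ν) _ _ fun μ => ?_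
  have hsign : ((colSign ν : ℤ) : ℂ) * ((colSign (ν * μ) : ℤ) : ℂ) = ((colSign μ : ℤ) : ℂ) := by
    rw [map_mul, ← Int.cast_mul, ← Units.val_mul, ← mul_assoc, Int.units_mul_self, one_mul]
  rw [Finset.mul_sum, Finset.smul_sum]
  refine Finset.sum_congr rfl fun ρ _ => ?_
  rw [mul_smul_comm, ← map_mul, ← mul_assoc, smul_smul, coe_mulLeft, ← colPerm_mul, hsign]

theorem of_swap_mul_youngSym {a a' : Fin i} (hne : a ≠ a') (b : Fin m) :
    of ℂ _ (swap (a, b) (a', b)) * youngSym i m = -youngSym i m := by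
  rw [← colPerm_mulSingle_swap, of_colPerm_mul_youngSym, colSign_mulSingle, Perm.sign_swap hne]
  simp

end RectangularTableau

section WreathInvariants

variable {i m : ℕ}

theorem subgroupSum_mul_of_mul_youngSym_eq_zero {g : Perm (Fin i × Fin m)} {a a' : Fin i}
    {b : Fin m} (hne : a ≠ a') (hblock : (g (a, b)).1 = (g (a', b)).1) :
    subgroupSum ℂ (wreathSubgroup i m) * of ℂ _ g * youngSym i m = 0 :=
  subgroupSum_mul_of_mul_eq_zero
    (by rw [← swap_apply_apply, mem_wreathSubgroup]; exact inWreath_swap hblock)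
    (of_swap_mul_youngSym hne b)

theorem exists_subgroupSum_mul_of_mul_youngSym_eq_smul (g : Perm (Fin i × Fin m)) :
    ∃ c : ℂ, subgroupSum ℂ (wreathSubgroup i m) * of ℂ _ g * youngSym i m =
      c • (subgroupSum ℂ (wreathSubgroup i m) * youngSym i m) := by
  by_cases hg : ∀ b, Function.Injective fun a => (g (a, b)).1
  · obtain ⟨h, μ, hh, rfl⟩ := exists_inWreath_mul_colPerm hg
    refine ⟨(colSign μ : ℤ), ?_⟩
    rw [map_mul, ← mul_assoc, subgroupSum_mul_of hh, mul_assoc, of_colPerm_mul_youngSym,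
      mul_smul_comm]
  · obtain ⟨b, hb⟩ := not_forall.mp hg
    obtain ⟨a, a', hblock, hne⟩ := Function.not_injective_iff.mp hb
    exact ⟨0, by rw [zero_smul, subgroupSum_mul_of_mul_youngSym_eq_zero hne hblock]⟩

theorem subgroupSum_mul_youngSym_ne_zero (heven : Even m) :
    subgroupSum ℂ (wreathSubgroup i m) * youngSym i m ≠ 0 := by
  classical
  have hterm (μ : Fin m → Perm (Fin i)) (ρ : Fin i → Perm (Fin m)) :
      ((colSign μ : ℤ) : ℂ) *
          (subgroupSum ℂ (wreathSubgroup i m) * of ℂ _ (colPerm μ * rowPerm ρ)).coeff 1 =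
        ((if ∃ π, μ = fun _ => π then 1 else 0 : ℕ) : ℂ) := by
    simp only [coeff_subgroupSum_mul_of_one, mem_wreathSubgroup,
      inWreath_colPerm_mul_rowPerm_iff]
    split_ifs with hμ
    · obtain ⟨π, rfl⟩ := hμ
      simp [colSign_const heven]
    · simp
  have hcoeff : (subgroupSum ℂ (wreathSubgroup i m) * youngSym i m).coeff 1 =
      ((∑ μ : Fin m → Perm (Fin i), ∑ ρ : Fin i → Perm (Fin m),
        if ∃ π, μ = fun _ => π then 1 else 0 : ℕ) : ℂ) := by
    simp only [youngSym_eq_sum_colSign, Finset.mul_sum, mul_smul_comm, coeff_sum, coeff_smul,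
      Finsupp.coe_finsetSum, Finset.sum_apply, Finsupp.smul_apply, smul_eq_mul, hterm,
      Nat.cast_sum]
  have hpos : 0 < ∑ μ : Fin m → Perm (Fin i), ∑ ρ : Fin i → Perm (Fin m),
      if ∃ π, μ = fun _ => π then 1 else 0 :=
    Finset.sum_pos' (fun _ _ => Nat.zero_le _) ⟨1, Finset.mem_univ _,
      Finset.sum_pos' (fun _ _ => Nat.zero_le _)
        ⟨1, Finset.mem_univ _, by rw [if_pos ⟨1, rfl⟩]; exact Nat.one_pos⟩⟩
  intro h0
  rw [h0, coeff_zero, Finsupp.zero_apply, eq_comm, Nat.cast_eq_zero] at hcoeff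
  exact hpos.ne' hcoeff

end WreathInvariants

theorem wreath_invariants_one_dimensional_general (i m : ℕ)
    (heven : Even m) :
    ∃ x₀ : MonoidAlgebra ℂ (Equiv.Perm (Fin i × Fin m)),
      x₀ ∈ rectSpecht i m ∧ x₀ ≠ 0 ∧
      {x | x ∈ rectSpecht i m ∧ ∀ h : Equiv.Perm (Fin i × Fin m), InWreath h →
          MonoidAlgebra.of ℂ (Equiv.Perm (Fin i × Fin m)) h * x = x}
        = {x | ∃ c : ℂ, x = c • x₀} :=
  ⟨_, subgroupSum_mul_mem_span _, subgroupSum_mul_youngSym_ne_zero heven,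
    invariants_span_eq_line _ exists_subgroupSum_mul_of_mul_youngSym_eq_smul⟩

/-- For the rectangular partition `mδ_i` (with `m` even), the space `[W_{mδ_i}]^H` of
`H`-invariants in the irreducible `S_{mi}`-module `W_{mδ_i}` — realized as the left ideal
generated by the Young symmetrizer, with `H` acting by left multiplication — is
one-dimensional. -/
theorem wreath_invariants_one_dimensional (i m : ℕ)
    (hm : 0 < m) (heven : Even m) (hi1 : 1 ≤ i) :
    ∃ x₀ : MonoidAlgebra ℂ (Equiv.Perm (Fin i × Fin m)),
      x₀ ∈ rectSpecht i m ∧ x₀ ≠ 0 ∧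
      {x | x ∈ rectSpecht i m ∧ ∀ h : Equiv.Perm (Fin i × Fin m), InWreath h →
          MonoidAlgebra.of ℂ (Equiv.Perm (Fin i × Fin m)) h * x = x}
        = {x | ∃ c : ℂ, x = c • x₀} :=
  wreath_invariants_one_dimensional_general i m heven
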